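/- Let t, t' ∈ B_n be distinct bracketings of size n, and let m ≥ 1. The graph algebra A(C_m) of the directed m-cycle C_m satisfies the bracketing identity t ≈ t' if and only if m divides M(t,t'). -/

import Mathlib

namespace AssocSpec

/-- Bracketings of products `x₁ x₂ ⋯ xₙ` represented as binary trees whose
leaves, read from left to right, are the variables `x₁, …, xₙ`. -/
inductive BTree : Type
  | leaf : BTree
  | node : BTree → BTree → BTree

namespace BTree

/-- The size of a bracketing: its number of variables (leaves). -/
def size : BTree → ℕ
  | leaf => 1
  | node l r => l.size + r.size

/-- Evaluate a bracketing in a magma `(A, op)`, the leaves taking the values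
`f k, f (k+1), …` from left to right. -/
def evalFrom {A : Type*} (op : A → A → A) : BTree → (ℕ → A) → ℕ → A
  | leaf, f, k => f k
  | node l r, f, k => op (evalFrom op l f k) (evalFrom op r f (k + l.size))

/-- The term operation induced by a bracketing `t` on a magma `(A, op)`;
the `i`-th variable (0-indexed) takes the value `f i`. -/
def termOp {A : Type*} (op : A → A → A) (t : BTree) (f : ℕ → A) : A :=
  evalFrom op t f 0

/-- The depth sequence of the DFS tree `G(t)` of a bracketing `t`: the `i`-th
entry is the depth of the `i`-th variable (0-indexed) in `G(t)`. -/
def depths : BTree → List ℕ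
  | leaf => [0]
  | node l r => l.depths ++ r.depths.map (· + 1)

/-- The depth of the `i`-th variable (0-indexed) in the DFS tree `G(t)`. -/
def depth (t : BTree) (i : ℕ) : ℕ := t.depths.getD i 0

/-- The height of the DFS tree `G(t)`: the maximum depth of a variable. -/
def height (t : BTree) : ℕ := t.depths.foldr max 0

/-- The edges of the DFS tree `G(t)`, the variables being indexed from the
given offset: `(p, c)` is an edge iff `x_p` is the parent of `x_c`. -/
def edgesFrom : BTree → ℕ → List (ℕ × ℕ)
  | leaf, _ => []
  | node l r, k => (k, k + l.size) :: (l.edgesFrom k ++ r.edgesFrom (k + l.size))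

/-- The edges of the DFS tree `G(t)` (variables indexed from `0`). -/
def edges (t : BTree) : List (ℕ × ℕ) := t.edgesFrom 0

end BTree

open Classical in
/-- The operation of the graph algebra of the digraph with vertex set `V` and
edge relation `E`; `none` plays the role of `∞`. -/
noncomputable def gaOp {V : Type*} (E : V → V → Prop) :
    Option V → Option V → Option V
  | some x, some y => if E x y then some x else none
  | _, _ => none

/-- The magma `(A, op)` satisfies the bracketing identity `t ≈ t'`. -/
def Satisfies {A : Type*} (op : A → A → A) (t t' : BTree) : Prop :=
  ∀ f : ℕ → A, BTree.termOp op t f = BTree.termOp op t' f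

/-- The `n`-th member `s_n` of the associative spectrum of the magma `(A, op)`:
the number of distinct term operations induced by bracketings of size `n`. -/
noncomputable def spectrum {A : Type*} (op : A → A → A) (n : ℕ) : ℕ :=
  Set.ncard {g : (ℕ → A) → A | ∃ t : BTree, t.size = n ∧ g = BTree.termOp op t}

/-- Reachability (by a walk) in the digraph with edge relation `E`. -/
def Reach {V : Type*} (E : V → V → Prop) : V → V → Prop :=
  Relation.ReflTransGen E

/-- `u` and `v` lie in the same strongly connected component. -/
def SameSCC {V : Type*} (E : V → V → Prop) (u v : V) : Prop :=
  Reach E u v ∧ Reach E v u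

/-- The strongly connected component of `v`, as a set of vertices. -/
def scc {V : Type*} (E : V → V → Prop) (v : V) : Set V :=
  {u | SameSCC E u v}

/-- `v` lies in a nontrivial strongly connected component (one carrying at
least one edge), i.e. `v` lies on a closed walk of positive length. -/
def InNontrivialSCC {V : Type*} (E : V → V → Prop) (v : V) : Prop :=
  ∃ u, E v u ∧ Reach E u v

/-- The induced subgraph on the set `K` (with the edge relation `E`) is an
`m`-whirl: `K` is partitioned into blocks `B 0, …, B (m-1)` so that edges go
exactly from each block to the cyclically next one. -/
def IsWhirlOn {V : Type*} (E : V → V → Prop) (K : Set V) (m : ℕ) : Prop :=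
  ∃ B : ZMod m → Set V,
    (∀ i, (B i).Nonempty) ∧
    (∀ i, B i ⊆ K) ∧
    (∀ x ∈ K, ∃! i, x ∈ B i) ∧
    (∀ x ∈ K, ∀ y ∈ K, (E x y ↔ ∃ i, x ∈ B i ∧ y ∈ B (i + 1)))

/-- `p 0 → p 1 → ⋯ → p len` is a path (a walk with pairwise distinct
vertices) in the digraph with edge relation `E`. -/
def IsPath {V : Type*} (E : V → V → Prop) (len : ℕ) (p : ℕ → V) : Prop :=
  (∀ i < len, E (p i) (p (i + 1))) ∧
  (∀ i ≤ len, ∀ j ≤ len, p i = p j → i = j)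

/-- The walk `p 0 → ⋯ → p len` is pleasant: all its vertices belong to
trivial strongly connected components. -/
def IsPleasant {V : Type*} (E : V → V → Prop) (len : ℕ) (p : ℕ → V) : Prop :=
  ∀ i ≤ len, ¬ InNontrivialSCC E (p i)

/-- The connected component `K` (of an undirected graph) is complete
bipartite: it splits into two nonempty parts with edges exactly between
vertices of different parts. -/
def IsCompleteBipartiteOn {V : Type*} (E : V → V → Prop) (K : Set V) : Prop :=
  ∃ B1 B2 : Set V, B1.Nonempty ∧ B2.Nonempty ∧ B1 ∪ B2 = K ∧ B1 ∩ B2 = ∅ ∧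
    ∀ x ∈ K, ∀ y ∈ K, (E x y ↔ (x ∈ B1 ∧ y ∈ B2) ∨ (x ∈ B2 ∧ y ∈ B1))

/-- A DFS tree of size `n`: a rooted directed tree on the vertices
`x₁, …, xₙ` (here `Fin n`, the root being `0`), given by its parent function,
such that the parent of every non-root vertex precedes it and the vertex set
of the induced subtree rooted at any vertex `i` is an interval `[i, i']`.
(The parent of the root is, by convention, the root itself.) -/
structure DFSTree (n : ℕ) where
  parent : Fin n → Fin n
  parent_lt : ∀ i : Fin n, 0 < (i : ℕ) → (parent i : ℕ) < (i : ℕ)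
  parent_root : ∀ i : Fin n, (i : ℕ) = 0 → parent i = i
  interval : ∀ i j k : Fin n, i ≤ j → j ≤ k →
    (∃ a : ℕ, parent^[a] k = i) → (∃ a : ℕ, parent^[a] j = i)

/-- The depth of the vertex `i` in a DFS tree: the length of the path from
the root to `i`. -/
noncomputable def DFSTree.depth {n : ℕ} (T : DFSTree n) (i : Fin n) : ℕ :=
  sInf {k : ℕ | (T.parent^[k] i : ℕ) = 0}

/-- The height of a DFS tree: the maximum depth of a vertex. -/
noncomputable def DFSTree.height {n : ℕ} (T : DFSTree n) : ℕ :=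
  Finset.univ.sup fun i => T.depth i

/-- The vertex `i` is a leaf (childless vertex) of the DFS tree `T`. -/
def DFSTree.IsLeaf {n : ℕ} (T : DFSTree n) (i : Fin n) : Prop :=
  ∀ j : Fin n, T.parent j = i → j = i

/-- `t_h(n)`: the number of DFS trees of size `n` of height at most `h`. -/
noncomputable def tcount (h n : ℕ) : ℕ :=
  Nat.card {T : DFSTree n // T.height ≤ h}

/-- `d` is a zag sequence: `d₁ = 0`, `d₂ = 1`, and
`1 ≤ d_{i+1} ≤ d_i + 1` for all `i` (1-indexed as in the paper;
here `d : Fin n → ℕ` is 0-indexed). -/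
def IsZag {n : ℕ} (d : Fin n → ℕ) : Prop :=
  (∀ h : 0 < n, d ⟨0, h⟩ = 0) ∧
  (∀ h : 1 < n, d ⟨1, h⟩ = 1) ∧
  (∀ i : ℕ, ∀ h : i + 1 < n,
    1 ≤ d ⟨i + 1, h⟩ ∧ d ⟨i + 1, h⟩ ≤ d ⟨i, Nat.lt_of_succ_lt h⟩ + 1)

/-- `M(t,t')`: the largest `m` such that the depth sequences of the DFS trees
of the bracketings `t` and `t'` are congruent modulo `m`. -/
noncomputable def Mval (t t' : BTree) : ℕ :=
  sSup {m : ℕ | ∀ i < t.size, t.depth i ≡ t'.depth i [MOD m]}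

end AssocSpec

/-
In the graph algebra of the successor digraph `a → a + 1` (the cycle `C_m` on `ZMod m`), a
bracketing `t` evaluates to a vertex `x` exactly when its `i`-th variable is assigned
`x + d_t(i)`, where `d_t(i)` is the depth of `x_i` in `G(t)`; otherwise it evaluates to `∞`.
Hence `t ≈ t'` holds iff `d_t(i) ≡ d_{t'}(i) (mod m)` for all `i`. The moduli with this property
are the divisors of the gcd of the differences `d_t(i) - d_{t'}(i)`, so their supremum
`M(t,t')` is that gcd, and `m` is such a modulus iff `m ∣ M(t,t')`.
-/

namespace Nat

-- For `g = 0` the set is unbounded and `sSup` takes its junk value `0`, which is again `g`.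
theorem sSup_setOf_dvd (g : ℕ) : sSup {k | k ∣ g} = g := by
  rcases Nat.eq_zero_or_pos g with rfl | hg
  · simp only [dvd_zero, Set.ofPred_true]
    exact Nat.sSup_of_not_bddAbove not_bddAbove_univ
  · exact le_antisymm (csSup_le ⟨1, one_dvd g⟩ fun k hk => Nat.le_of_dvd hg hk)
      (le_csSup ⟨g, fun k hk => Nat.le_of_dvd hg hk⟩ dvd_rfl)

theorem setOf_forall_modEq_eq (a b : ℕ → ℕ) (s : Finset ℕ) :
    {k | ∀ i ∈ s, a i ≡ b i [MOD k]} = {k | k ∣ s.gcd fun i => ((b i : ℤ) - a i).natAbs} := by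
  ext k
  simp [Finset.dvd_gcd_iff, Nat.modEq_iff_dvd, Int.natCast_dvd]

end Nat

namespace AssocSpec

namespace BTree

theorem length_depths (t : BTree) : t.depths.length = t.size := by
  induction t with
  | leaf => rfl
  | node l r ihl ihr => simp [depths, size, ihl, ihr]

theorem depth_node_of_lt {l r : BTree} {i : ℕ} (hi : i < l.size) :
    (node l r).depth i = l.depth i :=
  List.getD_append _ _ _ _ (l.length_depths ▸ hi)

theorem depth_node_add {l r : BTree} {i : ℕ} (hi : i < r.size) :
    (node l r).depth (l.size + i) = r.depth i + 1 := by
  rw [depth, depths, List.getD_append_right _ _ _ _ (by simp [length_depths]),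
    length_depths, Nat.add_sub_cancel_left, List.getD_eq_getElem _ _ (by simpa [length_depths]),
    List.getElem_map, depth, List.getD_eq_getElem]

end BTree

open BTree

theorem gaOp_eq_some_iff {V : Type*} (E : V → V → Prop) (a b : Option V) (x : V) :
    gaOp E a b = some x ↔ a = some x ∧ ∃ y, b = some y ∧ E x y := by
  rcases a with _ | a <;> rcases b with _ | b
  case some.some =>
    simp only [gaOp, Option.ite_none_right_eq_some, Option.some.injEq, exists_eq_left']
    exact ⟨fun ⟨h, hx⟩ => ⟨hx, hx ▸ h⟩, fun ⟨hx, h⟩ => ⟨hx ▸ h, hx⟩⟩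
  all_goals simp [gaOp]

section SuccGraph

variable {V : Type*} [AddCommMonoidWithOne V]

theorem evalFrom_succ_eq_some_iff (t : BTree) (f : ℕ → Option V) (k : ℕ) (x : V) :
    t.evalFrom (gaOp fun a b : V => b = a + 1) f k = some x ↔
      ∀ i < t.size, f (k + i) = some (x + t.depth i) := by
  induction t generalizing k x with
  | leaf => simp [evalFrom, size, depth, depths]
  | node l r ihl ihr =>
    simp only [evalFrom, gaOp_eq_some_iff, exists_eq_right, ihl, ihr]
    constructor
    · rintro ⟨hl, hr⟩ i hi
      rcases lt_or_ge i l.size with hil | hli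
      · rw [depth_node_of_lt hil]
        exact hl i hil
      · obtain ⟨j, rfl⟩ := Nat.exists_eq_add_of_le hli
        have hj : j < r.size := by simp only [size] at hi; omega
        rw [depth_node_add hj, ← add_assoc, hr j hj, Nat.cast_succ, ← add_assoc, add_right_comm]
    · intro h
      refine ⟨fun i hi => ?_, fun i hi => ?_⟩
      · rw [← depth_node_of_lt (r := r) hi]
        exact h i (by simp only [size]; omega)
      · rw [add_assoc, h _ (by simp only [size]; omega), depth_node_add hi, Nat.cast_succ, ← add_assoc, add_right_comm]

theorem satisfies_succ_iff {t t' : BTree} (h : t.size = t'.size) :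
    Satisfies (gaOp fun a b : V => b = a + 1) t t' ↔
      ∀ i < t.size, (t.depth i : V) = t'.depth i := by
  simp only [Satisfies, termOp]
  refine ⟨fun hsat i hi => ?_, fun hdepth f => Option.ext fun x => ?_⟩
  · let f : ℕ → Option V := fun j => some (t.depth j : V)
    have hf : t.evalFrom (gaOp fun a b : V => b = a + 1) f 0 = some 0 :=
      (evalFrom_succ_eq_some_iff t f 0 0).2 fun j _ => by simp [f]
    have := (evalFrom_succ_eq_some_iff t' f 0 0).1 (hsat f ▸ hf) i (h ▸ hi)
    simpa [f] using this
  · rw [evalFrom_succ_eq_some_iff, evalFrom_succ_eq_some_iff, ← h]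
    exact forall₂_congr fun i hi => by rw [hdepth i hi]

end SuccGraph

theorem dvd_Mval_iff (t t' : BTree) (m : ℕ) :
    m ∣ Mval t t' ↔ ∀ i < t.size, t.depth i ≡ t'.depth i [MOD m] := by
  have hset := Nat.setOf_forall_modEq_eq t.depth t'.depth (Finset.range t.size)
  simp only [Finset.mem_range] at hset
  rw [Mval, hset, Nat.sSup_setOf_dvd]
  exact (Set.ext_iff.mp hset m).symm

end AssocSpec

open AssocSpec in
theorem stmt14_general (m : ℕ) (n : ℕ) (t t' : BTree)
    (ht : t.size = n) (ht' : t'.size = n) :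
    Satisfies (gaOp (fun i j : ZMod m => j = i + 1)) t t' ↔ m ∣ Mval t t' := by
  rw [satisfies_succ_iff (ht.trans ht'.symm), dvd_Mval_iff]
  exact forall₂_congr fun i _ => ZMod.natCast_eq_natCast_iff _ _ _

open AssocSpec in
/-- For distinct bracketings `t, t'` of size `n` and `m ≥ 1`,
the graph algebra of the directed `m`-cycle `C_m` satisfies `t ≈ t'` iff
`m ∣ M(t,t')`. -/
theorem stmt14 (m : ℕ) (hm : 1 ≤ m) (n : ℕ) (t t' : BTree)
    (ht : t.size = n) (ht' : t'.size = n) (hne : t ≠ t') :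
    Satisfies (gaOp (fun i j : ZMod m => j = i + 1)) t t' ↔ m ∣ Mval t t' :=
  stmt14_general m n t t' ht ht'
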